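/- arXiv:2110.08039 — 2 statements merged into one kernel-verified Lean document; each statement's English description precedes it below -/
import Mathlib

section
/- Let n₁, n₂ ∈ ℝ³ be linearly independent with |n₁| = |n₂| and n₁ + n₂ ≠ 0, and let u₁, u₂ ∈ ℂ³ with u₁ · n₁ = 0, u₂ · n₂ = 0. If u₂ = γ · R(u₁) for some nonzero γ ∈ ℂ, where R is the rotation of ℝ³ mapping n₁/|n₁| to n₂/|n₂| along the geodesic of the unit sphere (extended complex-linearly to ℂ³), then P_{n₁+n₂}[(u₁ · n₂)u₂ + (u₂ · n₁)u₁] = 0, where P_m denotes the orthogonal projection of ℂ³ onto {v : m · v = 0}. -/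
open scoped Classical

noncomputable section

abbrev V3 := Fin 3 → ℝ
abbrev C3 := Fin 3 → ℂ

/-- Canonical inclusion of real vectors into `ℂ³`. -/
def toC (v : V3) : C3 := fun i => (v i : ℂ)

/-- Real dot product. -/
def dotR (u v : V3) : ℝ := ∑ i, u i * v i

/-- ℂ-bilinear dot product on `ℂ³`. -/
def dotC (u v : C3) : ℂ := ∑ i, u i * v i

/-- Euclidean norm of a vector of `ℝ³`. -/
def norm3 (v : V3) : ℝ := Real.sqrt (dotR v v)

/-- Cross product on `ℝ³`. -/
def crossR (u v : V3) : V3 :=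
  ![u 1 * v 2 - u 2 * v 1, u 2 * v 0 - u 0 * v 2, u 0 * v 1 - u 1 * v 0]

/-- ℂ-bilinear cross product on `ℂ³`. -/
def crossC (u v : C3) : C3 :=
  ![u 1 * v 2 - u 2 * v 1, u 2 * v 0 - u 0 * v 2, u 0 * v 1 - u 1 * v 0]

/-- Orthogonal projection of `ℂ³` onto `{v : m · v = 0}` (for a real frequency `m`). -/
def projC (m : V3) (v : C3) : C3 :=
  v - (dotC (toC m) v / ((dotR m m : ℝ) : ℂ)) • toC m

/-- Rodrigues rotation formula (unit axis `a`, cosine `c`, sine `s`). -/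
def rodriguesR (a : V3) (c s : ℝ) (v : V3) : V3 :=
  c • v + s • crossR a v + ((1 - c) * dotR a v) • a

/-- Complexified Rodrigues rotation formula; since the coefficients are real this acts on the
real and imaginary parts separately. -/
def rodriguesC (a : C3) (c s : ℂ) (v : C3) : C3 :=
  c • v + s • crossC a v + ((1 - c) * dotC a v) • a

/-- The rotation `R_{ω₁ ↦ ω₂}` around the axis `ω₁ × ω₂` by the angle `θ ∈ (0,π)` with
`cos θ = ω₁ · ω₂` (for unit vectors `ω₁ ≠ ±ω₂`, so that `sin θ = |ω₁ × ω₂|`). -/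
def geoRot (ω₁ ω₂ : V3) (v : V3) : V3 :=
  rodriguesR ((norm3 (crossR ω₁ ω₂))⁻¹ • crossR ω₁ ω₂) (dotR ω₁ ω₂) (norm3 (crossR ω₁ ω₂)) v

/-- The rotation `R_{ω₁ ↦ ω₂}` extended complex-linearly to `ℂ³`. -/
def geoRotC (ω₁ ω₂ : V3) (v : C3) : C3 :=
  rodriguesC (toC ((norm3 (crossR ω₁ ω₂))⁻¹ • crossR ω₁ ω₂)) ((dotR ω₁ ω₂ : ℝ) : ℂ)
    ((norm3 (crossR ω₁ ω₂) : ℝ) : ℂ) v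

/-- Rotation around the unit axis `a` by the angle `α`, extended complex-linearly to `ℂ³`. -/
def axisRotC (a : V3) (α : ℝ) (v : C3) : C3 :=
  rodriguesC (toC a) ((Real.cos α : ℝ) : ℂ) ((Real.sin α : ℝ) : ℂ) v

/-- `e∥(n) = e⊥ × (n/|n|)`. -/
def ePar (ePerp : V3) (n : V3) : V3 := crossR ePerp ((norm3 n)⁻¹ • n)

/-- Partial derivative of a real-valued function on `ℝ³`. -/
def pderivR (f : V3 → ℝ) (i : Fin 3) (x : V3) : ℝ := fderiv ℝ f x (Pi.single i 1)

/-- Partial derivative of a complex-valued function on `ℝ³`. -/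
def pderivC (f : V3 → ℂ) (i : Fin 3) (x : V3) : ℂ := fderiv ℝ f x (Pi.single i 1)

/-- Curl of a real vector field on `ℝ³`. -/
def curlR (u : V3 → V3) (x : V3) : V3 :=
  ![pderivR (fun y => u y 2) 1 x - pderivR (fun y => u y 1) 2 x,
    pderivR (fun y => u y 0) 2 x - pderivR (fun y => u y 2) 0 x,
    pderivR (fun y => u y 1) 0 x - pderivR (fun y => u y 0) 1 x]

/-- Curl of a complex vector field on `ℝ³`. -/
def curlC (u : V3 → C3) (x : V3) : C3 :=
  ![pderivC (fun y => u y 2) 1 x - pderivC (fun y => u y 1) 2 x,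
    pderivC (fun y => u y 0) 2 x - pderivC (fun y => u y 2) 0 x,
    pderivC (fun y => u y 1) 0 x - pderivC (fun y => u y 0) 1 x]

/-- Real and imaginary parts of a complex vector, as real vectors. -/
def reV (u : C3) : V3 := fun i => (u i).re
def imV (u : C3) : V3 := fun i => (u i).im

lemma toC_smul (t : ℝ) (v : V3) : toC (t • v) = (t:ℂ) • toC v := by
  funext i; simp [toC]

lemma toC_add (v w : V3) : toC (v + w) = toC v + toC w := by
  funext i; simp [toC]

lemma toC_sub (v w : V3) : toC (v - w) = toC v - toC w := by
  funext i; simp [toC]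

lemma crossC_smul_left (k : ℂ) (x y : C3) : crossC (k • x) y = k • crossC x y := by
  funext i; fin_cases i <;> simp [crossC] <;> ring

lemma crossC_smul_right (k : ℂ) (x y : C3) : crossC x (k • y) = k • crossC x y := by
  funext i; fin_cases i <;> simp [crossC] <;> ring

lemma dotC_smul_left (k : ℂ) (x y : C3) : dotC (k • x) y = k * dotC x y := by
  simp [dotC, Fin.sum_univ_three]; ring

lemma dotC_smul_right (k : ℂ) (x y : C3) : dotC x (k • y) = k * dotC x y := by
  simp [dotC, Fin.sum_univ_three]; ring

lemma dotC_add_left (x y z : C3) : dotC (x + y) z = dotC x z + dotC y z := by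
  simp [dotC, Fin.sum_univ_three]; ring

lemma dotC_toC_toC (x y : V3) : dotC (toC x) (toC y) = (dotR x y : ℂ) := by
  simp [dotC, dotR, toC, Fin.sum_univ_three]

lemma dotR_comm (x y : V3) : dotR x y = dotR y x := by
  simp [dotR, Fin.sum_univ_three]; ring

lemma crossC_toC (x y : V3) : crossC (toC x) (toC y) = toC (crossR x y) := by
  funext i; fin_cases i <;> simp [crossC, crossR, toC] <;> push_cast <;> ring

lemma crossC_cross (a b : V3) (u : C3) :
    crossC (toC (crossR a b)) u = dotC u (toC a) • toC b - dotC u (toC b) • toC a := by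
  funext i; fin_cases i <;>
    simp [crossC, crossR, toC, dotC, Fin.sum_univ_three] <;> push_cast <;> ring

lemma triple (W u : C3) : dotC W u • W = crossC W (crossC W u) + dotC W W • u := by
  funext i; fin_cases i <;> simp [crossC, dotC, Fin.sum_univ_three] <;> ring

lemma crossR_cross_left (a b : V3) :
    crossR (crossR a b) a = dotR a a • b - dotR a b • a := by
  funext i; fin_cases i <;> simp [crossR, dotR, Fin.sum_univ_three] <;> ring

lemma lagrange (a b : V3) :
    dotR (crossR a b) (crossR a b) = dotR a a * dotR b b - (dotR a b)^2 := by
  simp [dotR, crossR, Fin.sum_univ_three]; ring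

lemma dotR_self_nonneg (v : V3) : 0 ≤ dotR v v := by
  simp only [dotR, Fin.sum_univ_three]
  nlinarith [mul_self_nonneg (v 0), mul_self_nonneg (v 1), mul_self_nonneg (v 2)]

lemma norm3_sq (v : V3) : norm3 v ^ 2 = dotR v v := Real.sq_sqrt (dotR_self_nonneg v)

lemma eq_zero_of_dotR_self {v : V3} (h : dotR v v = 0) : v = 0 := by
  simp [dotR, Fin.sum_univ_three] at h
  have h0 : v 0 = 0 := by nlinarith [mul_self_nonneg (v 0), mul_self_nonneg (v 1), mul_self_nonneg (v 2)]
  have h1 : v 1 = 0 := by nlinarith [mul_self_nonneg (v 0), mul_self_nonneg (v 1), mul_self_nonneg (v 2)]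
  have h2 : v 2 = 0 := by nlinarith [mul_self_nonneg (v 0), mul_self_nonneg (v 1), mul_self_nonneg (v 2)]
  funext i; fin_cases i <;> simp [h0, h1, h2]

lemma dotR_smul_left (t : ℝ) (x y : V3) : dotR (t • x) y = t * dotR x y := by
  simp [dotR, Fin.sum_univ_three]; ring

lemma crossR_smul_smul (t t' : ℝ) (x y : V3) :
    crossR (t • x) (t' • y) = (t * t') • crossR x y := by
  funext i; fin_cases i <;> simp [crossR] <;> ring

lemma key (a b : V3) (u : C3) (ha : dotR a a = 1) (hb : dotR b b = 1)
    (hu : dotC u (toC a) = 0) (hw : crossR a b ≠ 0) :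
    dotC u (toC b) • geoRotC a b u + dotC (geoRotC a b u) (toC a) • u
      = (-(dotC u (toC b))^2 / (1 + (dotR a b : ℂ))) • toC (a + b) := by
  have hww : dotR (crossR a b) (crossR a b) = 1 - (dotR a b)^2 := by
    rw [lagrange, ha, hb]; ring
  have hwwpos : 0 < dotR (crossR a b) (crossR a b) :=
    lt_of_le_of_ne (dotR_self_nonneg _) (fun h => hw (eq_zero_of_dotR_self h.symm))
  have hc2 : (dotR a b)^2 < 1 := by nlinarith
  have h1c : (1:ℝ) + dotR a b ≠ 0 := by nlinarith
  have h1m : (1:ℝ) - dotR a b ≠ 0 := by nlinarith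
  have h1cC : (1:ℂ) + (dotR a b : ℂ) ≠ 0 := by
    intro h; apply h1c; exact_mod_cast h
  have h12C : (1:ℂ) - (dotR a b : ℂ)^2 ≠ 0 := by
    intro h; apply absurd hc2; push_neg
    have : ((1:ℝ) - (dotR a b)^2 : ℝ) = 0 := by exact_mod_cast h
    nlinarith
  have hs0 : norm3 (crossR a b) ≠ 0 := by
    intro h
    have := norm3_sq (crossR a b)
    rw [h] at this; simp at this
    exact absurd this.symm (ne_of_gt hwwpos)
  have hs0C : ((norm3 (crossR a b) : ℝ) : ℂ) ≠ 0 := by exact_mod_cast hs0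
  have hs2C : ((norm3 (crossR a b) : ℝ) : ℂ)^2 = 1 - (dotR a b : ℂ)^2 := by
    have h := norm3_sq (crossR a b)
    rw [hww] at h
    exact_mod_cast h
  have hcrossWu : crossC (toC (crossR a b)) u = (-(dotC u (toC b))) • toC a := by
    rw [crossC_cross, hu, zero_smul, zero_sub, ← neg_smul]
  have heW : dotC (toC (crossR a b)) u • toC (crossR a b)
      = (dotC u (toC b) * (dotR a b : ℂ)) • toC a + (-(dotC u (toC b))) • toC b
        + ((1:ℂ) - (dotR a b : ℂ)^2) • u := by
    rw [triple, hcrossWu, crossC_smul_right, crossC_toC, crossR_cross_left, ha,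
      dotC_toC_toC, hww, toC_sub, toC_smul, toC_smul]
    push_cast
    module
  have hK : ((1:ℂ) - (dotR a b : ℂ)) * ((norm3 (crossR a b) : ℝ) : ℂ)⁻¹
      * ((norm3 (crossR a b) : ℝ) : ℂ)⁻¹ = ((1:ℂ) + (dotR a b : ℂ))⁻¹ := by
    rw [mul_assoc, ← mul_inv, ← sq, hs2C]
    field_simp
    ring
  have hG : geoRotC a b u = u
      + (dotC u (toC b) * ((dotR a b : ℂ) * ((1:ℂ) + (dotR a b : ℂ))⁻¹ - 1)) • toC a
      + (-(dotC u (toC b) * ((1:ℂ) + (dotR a b : ℂ))⁻¹)) • toC b := by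
    simp only [geoRotC, rodriguesC]
    rw [toC_smul]
    push_cast
    rw [crossC_smul_left, dotC_smul_left, smul_smul, smul_smul,
      mul_inv_cancel₀ hs0C, one_smul]
    have h3 : ((1 - (dotR a b : ℂ)) * (((norm3 (crossR a b) : ℝ) : ℂ)⁻¹ * dotC (toC (crossR a b)) u)
        * ((norm3 (crossR a b) : ℝ) : ℂ)⁻¹) • toC (crossR a b)
        = (((1:ℂ) - (dotR a b : ℂ)) * ((norm3 (crossR a b) : ℝ) : ℂ)⁻¹
            * ((norm3 (crossR a b) : ℝ) : ℂ)⁻¹) • (dotC (toC (crossR a b)) u • toC (crossR a b)) := by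
      rw [smul_smul]; congr 1; ring
    rw [h3, hK, hcrossWu, heW]
    match_scalars <;> field_simp <;> ring
  have hRa : dotC (geoRotC a b u) (toC a) = -(dotC u (toC b)) := by
    rw [hG, dotC_add_left, dotC_add_left, dotC_smul_left, dotC_smul_left, hu,
      dotC_toC_toC, dotC_toC_toC, ha, dotR_comm b a]
    push_cast
    ring
  rw [hRa, hG, toC_add]
  have hk : ((1:ℂ) + (dotR a b:ℂ)) * ((1:ℂ)+(dotR a b:ℂ))⁻¹ = 1 := mul_inv_cancel₀ h1cC
  match_scalars
  · ring
  · linear_combination (dotC u (toC b))^2 * hk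
  · ring

lemma dotR_smul_right (t : ℝ) (x y : V3) : dotR x (t • y) = t * dotR x y := by
  simp [dotR, Fin.sum_univ_three]; ring

lemma projC_smul_toC (m : V3) (lam : ℂ) (hm : dotR m m ≠ 0) :
    projC m (lam • toC m) = 0 := by
  rw [projC, dotC_smul_right, dotC_toC_toC, mul_div_assoc,
    div_self (Complex.ofReal_ne_zero.mpr hm), mul_one, sub_self]

lemma cross_ne_zero_of_li {n₁ n₂ : V3} (hind : LinearIndependent ℝ ![n₁, n₂]) :
    crossR n₁ n₂ ≠ 0 := by
  have hn₁ : n₁ ≠ 0 := by simpa using hind.ne_zero 0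
  intro hc
  have h0 := congrFun hc 0
  have h1 := congrFun hc 1
  have h2 := congrFun hc 2
  simp [crossR] at h0 h1 h2
  have hdep : dotR n₁ n₂ • n₁ + (-(dotR n₁ n₁)) • n₂ = 0 := by
    funext i; fin_cases i <;>
      simp [dotR, Fin.sum_univ_three]
    · linear_combination n₁ 1 * h2 - n₁ 2 * h1
    · linear_combination n₁ 2 * h0 - n₁ 0 * h2
    · linear_combination n₁ 0 * h1 - n₁ 1 * h0
  rcases (LinearIndependent.pair_iff.mp hind) _ _ hdep with ⟨-, ht⟩
  exact hn₁ (eq_zero_of_dotR_self (by linarith))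


/-- If `|n₁| = |n₂|` and `u₂ = γ R_{n̂₁↦n̂₂} u₁`, then the two modes do not
interact: the Helmholtz projection of the nonlinear output at `n₁ + n₂` vanishes. -/
theorem no_interaction_of_rotation
    (n₁ n₂ : V3) (u₁ u₂ : C3)
    (hind : LinearIndependent ℝ ![n₁, n₂])
    (hnorm : norm3 n₁ = norm3 n₂)
    (hsum : n₁ + n₂ ≠ 0)
    (ho₁ : dotC u₁ (toC n₁) = 0) (ho₂ : dotC u₂ (toC n₂) = 0)
    (γ : ℂ) (hγ : γ ≠ 0)
    (hrot : u₂ = γ • geoRotC ((norm3 n₁)⁻¹ • n₁) ((norm3 n₂)⁻¹ • n₂) u₁) :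
    projC (n₁ + n₂) (dotC u₁ (toC n₂) • u₂ + dotC u₂ (toC n₁) • u₁) = 0 := by
  have hn₁ : n₁ ≠ 0 := by simpa using hind.ne_zero 0
  have hrne : norm3 n₁ ≠ 0 := by
    intro h
    exact hn₁ (eq_zero_of_dotR_self (by rw [← norm3_sq n₁, h]; ring))
  rw [← hnorm] at hrot
  have hω₁ : dotR ((norm3 n₁)⁻¹ • n₁) ((norm3 n₁)⁻¹ • n₁) = 1 := by
    rw [dotR_smul_left, dotR_smul_right, ← norm3_sq n₁]
    field_simp
  have hω₂ : dotR ((norm3 n₁)⁻¹ • n₂) ((norm3 n₁)⁻¹ • n₂) = 1 := by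
    rw [dotR_smul_left, dotR_smul_right, ← norm3_sq n₂, ← hnorm]
    field_simp
  have hu' : dotC u₁ (toC ((norm3 n₁)⁻¹ • n₁)) = 0 := by
    rw [toC_smul, dotC_smul_right, ho₁, mul_zero]
  have hwω : crossR ((norm3 n₁)⁻¹ • n₁) ((norm3 n₁)⁻¹ • n₂) ≠ 0 := by
    rw [crossR_smul_smul]
    exact smul_ne_zero (mul_ne_zero (inv_ne_zero hrne) (inv_ne_zero hrne))
      (cross_ne_zero_of_li hind)
  have K := key ((norm3 n₁)⁻¹ • n₁) ((norm3 n₁)⁻¹ • n₂) u₁ hω₁ hω₂ hu' hwω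
  have hn1eq : toC n₁ = ((norm3 n₁ : ℝ) : ℂ) • toC ((norm3 n₁)⁻¹ • n₁) := by
    rw [← toC_smul, smul_smul, mul_inv_cancel₀ hrne, one_smul]
  have hn2eq : toC n₂ = ((norm3 n₁ : ℝ) : ℂ) • toC ((norm3 n₁)⁻¹ • n₂) := by
    rw [← toC_smul, smul_smul, mul_inv_cancel₀ hrne, one_smul]
  have hE : dotC u₁ (toC n₂) • u₂ + dotC u₂ (toC n₁) • u₁
      = (((norm3 n₁ : ℝ) : ℂ) * γ) •
        (dotC u₁ (toC ((norm3 n₁)⁻¹ • n₂)) • geoRotC ((norm3 n₁)⁻¹ • n₁) ((norm3 n₁)⁻¹ • n₂) u₁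
          + dotC (geoRotC ((norm3 n₁)⁻¹ • n₁) ((norm3 n₁)⁻¹ • n₂) u₁)
              (toC ((norm3 n₁)⁻¹ • n₁)) • u₁) := by
    rw [hrot, hn1eq, hn2eq, dotC_smul_right, dotC_smul_right, dotC_smul_left]
    match_scalars <;> ring
  rw [hE, K]
  have hsum' : toC ((norm3 n₁)⁻¹ • n₁ + (norm3 n₁)⁻¹ • n₂)
      = (((norm3 n₁ : ℝ) : ℂ))⁻¹ • toC (n₁ + n₂) := by
    rw [← smul_add, toC_smul]
    push_cast
    rfl
  rw [hsum', smul_smul, smul_smul]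
  exact projC_smul_toC _ _ (fun h => hsum (eq_zero_of_dotR_self h))
end
end

section
/- Let n ∈ ℝ³ \ {0} and let J_n be as above. Then J_n commutes with the operator v ↦ i(n × v) on {v ∈ ℂ³ : n · v = 0}; in particular, if b is a positive (resp. negative) Beltrami vector at n, then exp(−Ω t J_n) b is again a positive (resp. negative) Beltrami vector at n for all t, Ω ∈ ℝ. -/
open scoped Classical

noncomputable section

/-
Write `M = i(n × ·)` and `P = P_n`. Since `M` kills `n` and maps into `n^⊥`, we have
`M P = M` and `P M = M`, so `J M = P (e₃ × M ·)` and `M J = M (e₃ × P ·)`. By the vector triple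
product both `P (e₃ × (n × v))` and `n × (e₃ × P v)` equal `-(n · e₃) P v`, hence `J` commutes
with `M`. Then so does `exp(−Ω t J)`, which therefore preserves the eigenspaces of `M`, and it
is invertible, so it maps nonzero vectors to nonzero vectors.
-/

open Matrix

lemma crossC_eq_cross (u v : C3) : crossC u v = u ⨯₃ v := rfl

section Projection

variable {m : V3}

lemma toC_dotProduct_toC (m : V3) : toC m ⬝ᵥ toC m = ((dotR m m : ℝ) : ℂ) := by
  simp [toC, dotR, dotProduct]

lemma projC_sub (m : V3) (u v : C3) : projC m (u - v) = projC m u - projC m v := by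
  simp only [projC, dotC, Pi.sub_apply, mul_sub, Finset.sum_sub_distrib, sub_div, sub_smul]
  abel

lemma projC_smul (m : V3) (c : ℂ) (v : C3) : projC m (c • v) = c • projC m v := by
  simp only [projC, dotC, Pi.smul_apply, smul_eq_mul, mul_left_comm _ c, ← Finset.mul_sum,
    mul_div_assoc, smul_sub, smul_smul]

lemma projC_toC (hm : dotR m m ≠ 0) : projC m (toC m) = 0 := by
  rw [projC, dotC, ← dotProduct, toC_dotProduct_toC, div_self (by exact_mod_cast hm), one_smul,
    sub_self]

lemma dotProduct_projC (hm : dotR m m ≠ 0) (v : C3) : toC m ⬝ᵥ projC m v = 0 := by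
  rw [projC, dotProduct_sub, dotProduct_smul, toC_dotProduct_toC, smul_eq_mul,
    div_mul_cancel₀ _ (by exact_mod_cast hm), dotC, dotProduct, sub_self]

lemma projC_of_dotProduct_eq_zero {v : C3} (hv : toC m ⬝ᵥ v = 0) : projC m v = v := by
  rw [projC, dotC, ← dotProduct, hv, zero_div, zero_smul, sub_zero]

lemma cross_projC (m : V3) (v : C3) : toC m ⨯₃ projC m v = toC m ⨯₃ v := by
  rw [projC, map_sub, map_smul, cross_self, smul_zero, sub_zero]

lemma projC_cross_cross (hm : dotR m m ≠ 0) (e v : C3) :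
    projC m (e ⨯₃ (toC m ⨯₃ v)) = toC m ⨯₃ (e ⨯₃ projC m v) := by
  calc projC m (e ⨯₃ (toC m ⨯₃ v))
      = projC m ((e ⬝ᵥ v) • toC m - (toC m ⬝ᵥ e) • v) := by rw [cross_cross_eq_smul_sub_smul']
    _ = (toC m ⬝ᵥ projC m v) • e - (e ⬝ᵥ toC m) • projC m v := by
        rw [projC_sub, projC_smul, projC_smul, projC_toC hm, dotProduct_projC hm,
          dotProduct_comm (toC m) e, smul_zero, zero_smul, zero_sub]
    _ = toC m ⨯₃ (e ⨯₃ projC m v) := (cross_cross_eq_smul_sub_smul' _ _ _).symm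

end Projection

/-- The Fourier symbol `v ↦ i (n × v)` of the curl. -/
def curlSymbol (n : V3) : Matrix (Fin 3) (Fin 3) ℂ :=
  LinearMap.toMatrix' (Complex.I • crossProduct (toC n))

lemma curlSymbol_mulVec (n : V3) (v : C3) : curlSymbol n *ᵥ v = Complex.I • (toC n ⨯₃ v) := by
  rw [curlSymbol, LinearMap.toMatrix'_mulVec, LinearMap.smul_apply]

lemma commute_curlSymbol {n : V3} (hn : dotR n n ≠ 0) (e : C3) {J : Matrix (Fin 3) (Fin 3) ℂ}
    (hJ : ∀ v, J *ᵥ v = projC n (e ⨯₃ projC n v)) : Commute (curlSymbol n) J := by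
  refine ext_iff_mulVec.mpr fun v => ?_
  rw [← mulVec_mulVec, ← mulVec_mulVec, hJ, hJ, curlSymbol_mulVec, curlSymbol_mulVec,
    cross_projC, projC_of_dotProduct_eq_zero (v := Complex.I • _)
      (by rw [dotProduct_smul, dot_self_cross, smul_zero]),
    map_smul, projC_smul, projC_cross_cross hn]

lemma Commute.mulVec_eigen {ι R : Type*} [Fintype ι] [CommRing R] {A B : Matrix ι ι R}
    (h : Commute A B) {σ : R} {b : ι → R} (hb : A *ᵥ b = σ • b) :
    A *ᵥ (B *ᵥ b) = σ • (B *ᵥ b) := by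
  rw [mulVec_mulVec, h.eq, ← mulVec_mulVec, hb, mulVec_smul]

/-- `J_n` commutes with `v ↦ i(n × v)` on `{v : n · v = 0}`; consequently
`exp(−Ω t J_n)` maps positive (resp. negative) Beltrami vectors at `n` to positive (resp.
negative) Beltrami vectors at `n`. -/
theorem coriolis_preserves_beltrami
    (n : V3) (hn : n ≠ 0) (J : Matrix (Fin 3) (Fin 3) ℂ)
    (hJ : ∀ v : C3, J.mulVec v = projC n (crossC (toC ![0, 0, 1]) (projC n v))) :
    (∀ v : C3, dotC (toC n) v = 0 →
      J.mulVec (Complex.I • crossC (toC n) v) = Complex.I • crossC (toC n) (J.mulVec v)) ∧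
    ∀ σ : ℝ, (σ = norm3 n ∨ σ = -norm3 n) →
      ∀ b : C3, b ≠ 0 → Complex.I • crossC (toC n) b = ((σ : ℝ) : ℂ) • b →
        ∀ t Ω : ℝ,
          (NormedSpace.exp ((-(Ω * t) : ℂ) • J)).mulVec b ≠ 0 ∧
          Complex.I • crossC (toC n) ((NormedSpace.exp ((-(Ω * t) : ℂ) • J)).mulVec b)
            = ((σ : ℝ) : ℂ) • (NormedSpace.exp ((-(Ω * t) : ℂ) • J)).mulVec b := by
  simp only [crossC_eq_cross, ← curlSymbol_mulVec] at hJ ⊢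
  have hM : Commute (curlSymbol n) J :=
    commute_curlSymbol (dotProduct_self_eq_zero.not.mpr hn) _ hJ
  refine ⟨fun v _ => by rw [mulVec_mulVec, ← hM.eq, ← mulVec_mulVec], ?_⟩
  intro σ _ b hb hbσ t Ω
  have hE : Commute (curlSymbol n) (NormedSpace.exp ((-(Ω * t) : ℂ) • J)) :=
    (hM.smul_right _).exp_right
  exact ⟨((mulVec_injective_of_isUnit (isUnit_exp _)).ne_iff' (mulVec_zero _)).mpr hb,
    hE.mulVec_eigen hbσ⟩
end
end
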